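/- arXiv:2204.06316 — 5 statements merged into one kernel-verified Lean document; each statement's English description precedes it below -/
import Mathlib

section
/- Let ℓ ∈ H be isotropic and δ_ℓ the transvection δ_ℓ(h) = h + ⟨h,ℓ⟩ ℓ ⊗ x_ℓ on H ⊗ R. Let W ⊆ H be a symplectic subspace with symplectic basis α_1,…,α_h, β_1,…,β_h, let ω_W = ∑ α_i ∧ β_i ∈ ∧²H, and write ℓ = μ + λ with λ ∈ W and μ orthogonal to W with respect to the decomposition H = V ⊕ W. Then δ_ℓ(ω_W) = ω_W + (μ ∧ λ) ⊗ x_ℓ in ∧²(H ⊗ R); in particular δ_ℓ(ω_W) ≡ ω_W modulo (V ∧ W) ⊗ R. -/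
set_option maxHeartbeats 1000000


open TensorProduct ExteriorAlgebra

/-- Auxiliary: expansion of a product of two perturbed factors when the
perturbation direction `L` squares to zero. -/
theorem stmt4_aux_prod {R E : Type*} [CommRing R] [Ring E] [Algebra R E]
    (a b L : E) (x c d : R) (hLL : L * L = 0) (hbL : L * b = -(b * L)) :
    (a + c • (x • L)) * (b + d • (x • L))
      = a * b + (x • (d • (a * L)) - x • (c • (b * L))) := by
  simp only [mul_add, add_mul, mul_smul_comm, smul_mul_assoc, hLL, hbL,
    smul_neg, smul_zero]
  module

/-- Let `ℓ = μ + λ ∈ H` with `μ ∈ V`, `λ ∈ W` for a decomposition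
`H = V ⊕ W` with `W` symplectic with symplectic basis `α, β` and `μ` orthogonal to `W`.
Then the transvection `δ_ℓ(h) = h + ⟨h,ℓ⟩ ℓ ⊗ x` on `H ⊗ R` sends
`ω_W = ∑ α_i ∧ β_i` to `ω_W + (μ ∧ λ) ⊗ x`; in particular `δ_ℓ(ω_W) ≡ ω_W mod (V ∧ W) ⊗ R`. -/
theorem stmt_4 {H : Type*} [AddCommGroup H] [Module ℤ H] [Module.Free ℤ H]
    (B : H →ₗ[ℤ] H →ₗ[ℤ] ℤ) (halt : ∀ h : H, B h h = 0)
    (R : Type*) [CommRing R] {h : ℕ}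
    (α β : Fin h → H)
    (hαβ : ∀ i j, B (α i) (β j) = if i = j then 1 else 0)
    (hαα : ∀ i j, B (α i) (α j) = 0) (hββ : ∀ i j, B (β i) (β j) = 0)
    (V : Submodule ℤ H)
    (hVW : ∀ v ∈ V, (∀ i, B v (α i) = 0) ∧ (∀ i, B v (β i) = 0))
    (hdirect : ∀ m : H, ∃ v ∈ V, ∃ w ∈ Submodule.span ℤ (Set.range α ∪ Set.range β), m = v + w)
    (μ lam ℓ : H) (hμ : μ ∈ V)
    (hlam : lam ∈ Submodule.span ℤ (Set.range α ∪ Set.range β))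
    (hℓ : ℓ = μ + lam) (hiso : B ℓ ℓ = 0)
    (x : R)
    (δ : (R ⊗[ℤ] H) →ₗ[R] (R ⊗[ℤ] H))
    (hδ : ∀ (a : R) (h' : H),
      δ (a ⊗ₜ[ℤ] h') = a ⊗ₜ[ℤ] h' + (x * a) ⊗ₜ[ℤ] (B h' ℓ • ℓ)) :
    ExteriorAlgebra.map δ
        (∑ i, ι R ((1 : R) ⊗ₜ[ℤ] α i) * ι R ((1 : R) ⊗ₜ[ℤ] β i))
      = (∑ i, ι R ((1 : R) ⊗ₜ[ℤ] α i) * ι R ((1 : R) ⊗ₜ[ℤ] β i))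
        + x • (ι R ((1 : R) ⊗ₜ[ℤ] μ) * ι R ((1 : R) ⊗ₜ[ℤ] lam)) ∧
    ExteriorAlgebra.map δ
        (∑ i, ι R ((1 : R) ⊗ₜ[ℤ] α i) * ι R ((1 : R) ⊗ₜ[ℤ] β i))
      - (∑ i, ι R ((1 : R) ⊗ₜ[ℤ] α i) * ι R ((1 : R) ⊗ₜ[ℤ] β i))
      ∈ Submodule.span R
          {z : ExteriorAlgebra R (R ⊗[ℤ] H) |
            ∃ v ∈ V, ∃ w ∈ Submodule.span ℤ (Set.range α ∪ Set.range β),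
              z = ι R ((1 : R) ⊗ₜ[ℤ] v) * ι R ((1 : R) ⊗ₜ[ℤ] w)} := by
  classical
  -- antisymmetry of B
  have hanti : ∀ a b : H, B a b = - B b a := by
    intro a b
    have h1 := halt (a + b)
    simp only [map_add, LinearMap.add_apply, halt a, halt b] at h1
    linarith
  -- decompose lam along the basis
  obtain ⟨u, hu, v, hv, huv⟩ :=
    Submodule.mem_sup.mp (by rwa [Submodule.span_union] at hlam)
  obtain ⟨p, hp⟩ := (Submodule.mem_span_range_iff_exists_fun ℤ).mp hu
  obtain ⟨q, hq⟩ := (Submodule.mem_span_range_iff_exists_fun ℤ).mp hv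
  -- compute the pairings
  have haℓ : ∀ i, B (α i) ℓ = q i := by
    intro i
    rw [hℓ, ← huv, ← hp, ← hq]
    have h1 : B (α i) μ = 0 := by
      rw [hanti]; simpa using ((hVW μ hμ).1 i)
    simp [map_add, map_sum, h1, hαα, hαβ]
  have hbℓ : ∀ i, B (β i) ℓ = - p i := by
    intro i
    rw [hℓ, ← huv, ← hp, ← hq]
    have h1 : B (β i) μ = 0 := by
      rw [hanti]; simpa using ((hVW μ hμ).2 i)
    have h2 : ∀ j, B (β i) (α j) = if i = j then -1 else 0 := by
      intro j
      rw [hanti, hαβ]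
      by_cases hij : i = j
      · subst hij; simp
      · simp [hij, Ne.symm hij]
    simp [map_add, map_sum, h1, h2, hββ]
  -- key sum identity in H
  have hsumH : (∑ i, (B (β i) ℓ • α i - B (α i) ℓ • β i)) = - lam := by
    have e : ∀ i, B (β i) ℓ • α i - B (α i) ℓ • β i
        = - (p i • α i) - q i • β i := by
      intro i; rw [haℓ, hbℓ, neg_zsmul]
    rw [Finset.sum_congr rfl fun i _ => e i, ← huv, ← hp, ← hq,
      Finset.sum_sub_distrib, Finset.sum_neg_distrib, neg_add, ← sub_eq_add_neg]
    simp only [← Int.cast_smul_eq_zsmul ℤ, Int.cast_id]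
  -- the basic embedding of H into the exterior algebra
  set f : H →ₗ[ℤ] ExteriorAlgebra R (R ⊗[ℤ] H) :=
    ((ι R).restrictScalars ℤ).comp (TensorProduct.mk ℤ R H 1) with hf
  have hfdef : ∀ m : H, f m = ι R ((1 : R) ⊗ₜ[ℤ] m) := fun m => rfl
  have hswap : ∀ m n : H, f m * f n = - (f n * f m) := by
    intro m n
    simp only [hfdef]
    exact eq_neg_of_add_eq_zero_left
      (ι_add_mul_swap ((1 : R) ⊗ₜ[ℤ] m) ((1 : R) ⊗ₜ[ℤ] n))
  have hsq : ∀ m : H, f m * f m = 0 := fun m => ι_sq_zero _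
  have hfz : ∀ (c : ℤ) (m : H), f (c • m) = (c : R) • f m := by
    intro c m
    rw [map_zsmul, ← Int.cast_smul_eq_zsmul R]
  -- how map δ acts on generators
  have hιδ : ∀ m : H, (ExteriorAlgebra.map δ) (f m)
      = f m + ((B m ℓ : ℤ) : R) • (x • f ℓ) := by
    intro m
    rw [hfdef, map_apply_ι, hδ, mul_one, map_add]
    congr 1
    have hg : (x ⊗ₜ[ℤ] (B m ℓ • ℓ) : R ⊗[ℤ] H)
        = x • ((1 : R) ⊗ₜ[ℤ] (B m ℓ • ℓ)) := by
      rw [smul_tmul', smul_eq_mul, mul_one]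
    rw [hg, map_smul, ← hfdef, hfz, smul_comm]
  -- per-index computation
  have hterm : ∀ i, (ExteriorAlgebra.map δ) (f (α i) * f (β i))
      = f (α i) * f (β i)
        + x • (f (B (β i) ℓ • α i - B (α i) ℓ • β i) * f ℓ) := by
    intro i
    rw [map_mul, hιδ, hιδ,
      stmt4_aux_prod (f (α i)) (f (β i)) (f ℓ) x ((B (α i) ℓ : ℤ) : R)
        ((B (β i) ℓ : ℤ) : R) (hsq ℓ) (hswap ℓ (β i)),
      map_sub, hfz, hfz, sub_mul, smul_mul_assoc, smul_mul_assoc, smul_sub]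
  -- the cross term equals x • (f μ * f lam)
  have hcross : (∑ i, x • (f (B (β i) ℓ • α i - B (α i) ℓ • β i) * f ℓ))
      = x • (f μ * f lam) := by
    rw [← Finset.smul_sum, ← Finset.sum_mul, ← map_sum, hsumH]
    congr 1
    have hℓ' : f ℓ = f μ + f lam := by rw [hℓ, map_add]
    rw [map_neg, hℓ', neg_mul, mul_add, hsq, add_zero, hswap, neg_neg]
  -- main equality
  have hmain : ExteriorAlgebra.map δ
        (∑ i, ι R ((1 : R) ⊗ₜ[ℤ] α i) * ι R ((1 : R) ⊗ₜ[ℤ] β i))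
      = (∑ i, ι R ((1 : R) ⊗ₜ[ℤ] α i) * ι R ((1 : R) ⊗ₜ[ℤ] β i))
        + x • (ι R ((1 : R) ⊗ₜ[ℤ] μ) * ι R ((1 : R) ⊗ₜ[ℤ] lam)) := by
    simp only [← hfdef]
    rw [map_sum, Finset.sum_congr rfl fun i _ => hterm i,
      Finset.sum_add_distrib, hcross]
  refine ⟨hmain, ?_⟩
  rw [hmain, add_sub_cancel_left]
  exact Submodule.smul_mem _ x
    (Submodule.subset_span ⟨μ, hμ, lam, hlam, rfl⟩)
end

section
/- With δ = ((I,0),(Q,I)) as above, for coefficients a_{ijk} ∈ R (1 ≤ i < j ≤ g, 1 ≤ k ≤ g), we have (∧³δ − I)²(∑_{i<j;k} a_{ijk} α_i∧α_j∧β_k) = ∑_{r<s<t} c_{rst} β_r∧β_s∧β_t, where c_{rst} = 2 ∑_{i<j} det of the 3×3 matrix with rows (q_{ri}, q_{rj}, a_{ijr}), (q_{si}, q_{sj}, a_{ijs}), (q_{ti}, q_{tj}, a_{ijt}). -/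
open ExteriorAlgebra Finset Matrix

section
variable {R A : Type*} [CommRing R] [Ring A] [Algebra R A] {g : ℕ}

private lemma swap12 (f : Fin g → Fin g → Fin g → A) :
    ∑ x : Fin g, ∑ y : Fin g, ∑ z : Fin g, f x y z
      = ∑ y : Fin g, ∑ x : Fin g, ∑ z : Fin g, f x y z := Finset.sum_comm

private lemma swap23 (f : Fin g → Fin g → Fin g → A) :
    ∑ x : Fin g, ∑ y : Fin g, ∑ z : Fin g, f x y z
      = ∑ x : Fin g, ∑ z : Fin g, ∑ y : Fin g, f x y z :=
  Finset.sum_congr rfl fun _ _ => Finset.sum_comm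

private lemma filt_to_ite (G : Fin g → Fin g → Fin g → A) :
    (∑ a : Fin g, ∑ b ∈ univ.filter (fun b => a < b), ∑ c ∈ univ.filter (fun c => b < c), G a b c)
      = ∑ a : Fin g, ∑ b : Fin g, ∑ c : Fin g, if a < b ∧ b < c then G a b c else 0 := by
  simp_rw [sum_filter]
  refine Finset.sum_congr rfl fun a _ => Finset.sum_congr rfl fun b _ => ?_
  by_cases h : a < b <;> simp [h]

private lemma key (F : Fin g → Fin g → Fin g → A)
    (h0 : ∀ r s k : Fin g, r = s ∨ s = k ∨ r = k → F r s k = 0) :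
    ∑ r : Fin g, ∑ s : Fin g, ∑ k : Fin g, F r s k
      = ∑ a : Fin g, ∑ b ∈ univ.filter (fun b => a < b), ∑ c ∈ univ.filter (fun c => b < c),
          (F a b c + F a c b + F b a c + F b c a + F c a b + F c b a) := by
  have point : ∀ r s k : Fin g, F r s k
      = (if r < s ∧ s < k then F r s k else 0)
      + (if r < k ∧ k < s then F r s k else 0)
      + (if s < r ∧ r < k then F r s k else 0)
      + (if k < r ∧ r < s then F r s k else 0)
      + (if s < k ∧ k < r then F r s k else 0)
      + (if k < s ∧ s < r then F r s k else 0) := by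
    intro r s k
    rcases lt_trichotomy r s with h1 | h1 | h1 <;>
      rcases lt_trichotomy s k with h2 | h2 | h2 <;>
      rcases lt_trichotomy r k with h3 | h3 | h3 <;>
      simp_all [h0, lt_asymm, lt_irrefl] <;> (exfalso; omega)
  rw [filt_to_ite]
  have distr : ∀ (P : Prop) [Decidable P] (x1 x2 x3 x4 x5 x6 : A),
      (if P then x1 + x2 + x3 + x4 + x5 + x6 else 0)
        = (if P then x1 else 0) + (if P then x2 else 0) + (if P then x3 else 0)
          + (if P then x4 else 0) + (if P then x5 else 0) + (if P then x6 else 0) := by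
    intros P _ x1 x2 x3 x4 x5 x6; split <;> simp
  rw [show (∑ r : Fin g, ∑ s : Fin g, ∑ k : Fin g, F r s k)
      = ∑ r : Fin g, ∑ s : Fin g, ∑ k : Fin g,
          ((if r < s ∧ s < k then F r s k else 0)
          + (if r < k ∧ k < s then F r s k else 0)
          + (if s < r ∧ r < k then F r s k else 0)
          + (if k < r ∧ r < s then F r s k else 0)
          + (if s < k ∧ k < r then F r s k else 0)
          + (if k < s ∧ s < r then F r s k else 0)) from
    Finset.sum_congr rfl fun r _ => Finset.sum_congr rfl fun s _ =>
      Finset.sum_congr rfl fun k _ => point r s k]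
  simp_rw [distr, Finset.sum_add_distrib]
  congr 1
  · congr 1
    · congr 1
      · congr 1
        · congr 1
          -- region r<k∧k<s ↦ F a c b
          exact swap23 _
        · -- region s<r∧r<k ↦ F b a c
          exact swap12 _
      · -- region k<r∧r<s ↦ F b c a
        exact (swap23 _).trans (swap12 _)
    · -- region s<k∧k<r ↦ F c a b
      exact (swap12 _).trans (swap23 _)
  · -- region k<s∧s<r ↦ F c b a
    exact ((swap12 _).trans (swap23 _)).trans (swap12 _)

private lemma core (e : Fin g → A) (hsq : ∀ x, e x * e x = 0)
    (hswap : ∀ x y, e x * e y = -(e y * e x))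
    (c : Fin g → Fin g → Fin g → R) :
    ∑ r : Fin g, ∑ s : Fin g, ∑ k : Fin g, c r s k • (e r * e s * e k)
      = ∑ r : Fin g, ∑ s ∈ univ.filter (fun s => r < s), ∑ t ∈ univ.filter (fun t => s < t),
          (c r s t - c r t s - c s r t + c s t r + c t r s - c t s r) • (e r * e s * e t) := by
  have h1 : ∀ x y z, e x * e z * e y = -(e x * e y * e z) := by
    intro x y z; rw [mul_assoc, hswap z y, mul_neg, mul_assoc]
  have h2 : ∀ x y z, e y * e x * e z = -(e x * e y * e z) := by
    intro x y z; rw [hswap y x, neg_mul]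
  have h0 : ∀ r s k : Fin g, r = s ∨ s = k ∨ r = k → c r s k • (e r * e s * e k) = 0 := by
    rintro r s k (rfl | rfl | rfl)
    · rw [hsq, zero_mul, smul_zero]
    · rw [mul_assoc, hsq, mul_zero, smul_zero]
    · have : e r * e s * e r = 0 := by
        rw [mul_assoc, hswap s r, mul_neg, ← mul_assoc, hsq, zero_mul, neg_zero]
      rw [this, smul_zero]
  rw [key _ h0]
  refine Finset.sum_congr rfl fun a _ => Finset.sum_congr rfl fun b _ =>
    Finset.sum_congr rfl fun t _ => ?_
  have eacb : e a * e t * e b = -(e a * e b * e t) := h1 a b t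
  have ebac : e b * e a * e t = -(e a * e b * e t) := h2 a b t
  have ebta : e b * e t * e a = e a * e b * e t := by rw [h1 b a t, h2 a b t, neg_neg]
  have etab : e t * e a * e b = e a * e b * e t := by rw [h2 a t b, h1 a b t, neg_neg]
  have etba : e t * e b * e a = -(e a * e b * e t) := by rw [h1 t a b, etab]
  rw [eacb, ebac, ebta, etab, etba]
  module


private lemma pair_eq (f : Fin g → Fin g → A) :
    ∑ i : Fin g, ∑ j ∈ univ.filter (fun j => i < j), f i j
      = ∑ p ∈ (univ : Finset (Fin g × Fin g)).filter (fun p => p.1 < p.2), f p.1 p.2 := by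
  have h : (∑ p ∈ (univ : Finset (Fin g × Fin g)).filter (fun p => p.1 < p.2), f p.1 p.2)
      = ∑ i : Fin g, ∑ j : Fin g, if i < j then f i j else 0 := by
    rw [Finset.sum_filter, Fintype.sum_prod_type]
  rw [h]
  simp_rw [Finset.sum_filter]

private lemma triple_eq (f : Fin g → Fin g → Fin g → A) :
    (∑ r : Fin g, ∑ s ∈ univ.filter (fun s => r < s), ∑ t ∈ univ.filter (fun t => s < t), f r s t)
      = ∑ p ∈ (univ : Finset (Fin g × Fin g × Fin g)).filter
          (fun p => p.1 < p.2.1 ∧ p.2.1 < p.2.2), f p.1 p.2.1 p.2.2 := by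
  have h : (∑ p ∈ (univ : Finset (Fin g × Fin g × Fin g)).filter
        (fun p => p.1 < p.2.1 ∧ p.2.1 < p.2.2), f p.1 p.2.1 p.2.2)
      = ∑ a : Fin g, ∑ b : Fin g, ∑ c : Fin g, if a < b ∧ b < c then f a b c else 0 := by
    rw [Finset.sum_filter, Fintype.sum_prod_type]
    simp_rw [Fintype.sum_prod_type]
  rw [h, filt_to_ite]

private lemma block_swap (f : Fin g → Fin g → Fin g → Fin g → Fin g → A) :
    (∑ i : Fin g, ∑ j ∈ univ.filter (fun j => i < j),
        ∑ r : Fin g, ∑ s ∈ univ.filter (fun s => r < s), ∑ t ∈ univ.filter (fun t => s < t),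
          f i j r s t)
      = ∑ r : Fin g, ∑ s ∈ univ.filter (fun s => r < s), ∑ t ∈ univ.filter (fun t => s < t),
          ∑ i : Fin g, ∑ j ∈ univ.filter (fun j => i < j), f i j r s t := by
  calc (∑ i : Fin g, ∑ j ∈ univ.filter (fun j => i < j),
        ∑ r : Fin g, ∑ s ∈ univ.filter (fun s => r < s), ∑ t ∈ univ.filter (fun t => s < t),
          f i j r s t)
      = ∑ p ∈ (univ : Finset (Fin g × Fin g)).filter (fun p => p.1 < p.2),
          ∑ w ∈ (univ : Finset (Fin g × Fin g × Fin g)).filter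
            (fun w => w.1 < w.2.1 ∧ w.2.1 < w.2.2), f p.1 p.2 w.1 w.2.1 w.2.2 := by
        rw [pair_eq (f := fun i j => ∑ r : Fin g, ∑ s ∈ univ.filter (fun s => r < s),
          ∑ t ∈ univ.filter (fun t => s < t), f i j r s t)]
        exact Finset.sum_congr rfl fun p _ => triple_eq _
    _ = ∑ w ∈ (univ : Finset (Fin g × Fin g × Fin g)).filter
            (fun w => w.1 < w.2.1 ∧ w.2.1 < w.2.2),
          ∑ p ∈ (univ : Finset (Fin g × Fin g)).filter (fun p => p.1 < p.2),
            f p.1 p.2 w.1 w.2.1 w.2.2 := Finset.sum_comm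
    _ = ∑ r : Fin g, ∑ s ∈ univ.filter (fun s => r < s), ∑ t ∈ univ.filter (fun t => s < t),
          ∑ i : Fin g, ∑ j ∈ univ.filter (fun j => i < j), f i j r s t := by
        rw [triple_eq (f := fun r s t => ∑ i : Fin g, ∑ j ∈ univ.filter (fun j => i < j),
          f i j r s t)]
        exact Finset.sum_congr rfl fun w _ => (pair_eq (f := fun i j => f i j w.1 w.2.1 w.2.2)).symm

end

set_option maxHeartbeats 1000000 in
/-- With `δ = ((I,0),(Q,I))` as before, for coefficients
`a_{ijk} ∈ R` (`i < j`), one has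
`(∧³δ − I)²(∑ a_{ijk} α_i∧α_j∧β_k) = ∑_{r<s<t} c_{rst} β_r∧β_s∧β_t` with
`c_{rst} = 2 ∑_{i<j} det [[q_{ri},q_{rj},a_{ijr}],[q_{si},q_{sj},a_{ijs}],[q_{ti},q_{tj},a_{ijt}]]`. -/
theorem stmt_9 {R M : Type*} [CommRing R] [AddCommGroup M] [Module R M]
    {g : ℕ} (bas : Module.Basis (Fin g ⊕ Fin g) R M)
    (α β : Fin g → M)
    (hα : ∀ i, α i = bas (Sum.inl i)) (hβ : ∀ i, β i = bas (Sum.inr i))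
    (q : Fin g → Fin g → R) (hsym : ∀ i j, q i j = q j i)
    (δ : M →ₗ[R] M)
    (hδα : ∀ j, δ (α j) = α j + ∑ i, q i j • β i)
    (hδβ : ∀ j, δ (β j) = β j)
    (a : Fin g → Fin g → Fin g → R) :
    ExteriorAlgebra.map δ (ExteriorAlgebra.map δ
        (∑ i : Fin g, ∑ j ∈ univ.filter (fun j => i < j), ∑ k : Fin g,
          a i j k • (ι R (α i) * ι R (α j) * ι R (β k))))
      - 2 • ExteriorAlgebra.map δ
        (∑ i : Fin g, ∑ j ∈ univ.filter (fun j => i < j), ∑ k : Fin g,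
          a i j k • (ι R (α i) * ι R (α j) * ι R (β k)))
      + (∑ i : Fin g, ∑ j ∈ univ.filter (fun j => i < j), ∑ k : Fin g,
          a i j k • (ι R (α i) * ι R (α j) * ι R (β k)))
      = ∑ r : Fin g, ∑ s ∈ univ.filter (fun s => r < s),
          ∑ t ∈ univ.filter (fun t => s < t),
            (2 * ∑ i : Fin g, ∑ j ∈ univ.filter (fun j => i < j),
              (!![q r i, q r j, a i j r;
                  q s i, q s j, a i j s;
                  q t i, q t j, a i j t] : Matrix (Fin 3) (Fin 3) R).det) •
              (ι R (β r) * ι R (β s) * ι R (β t)) := by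
  classical
  set v : Fin g → M := fun j => ∑ i, q i j • β i with hv
  have hδv : ∀ j, δ (v j) = v j := by
    intro j
    simp only [hv, map_sum, _root_.map_smul, hδβ]
  have hδα' : ∀ j, δ (α j) = α j + v j := hδα
  have hδδα : ∀ j, δ (δ (α j)) = α j + v j + v j := by
    intro j; rw [hδα', map_add, hδα', hδv]
  have hδδβ : ∀ j, δ (δ (β j)) = β j := by intro j; rw [hδβ, hδβ]
  have hmain : ∀ i j k : Fin g,
      ι R (δ (δ (α i))) * ι R (δ (δ (α j))) * ι R (δ (δ (β k)))
        - 2 • (ι R (δ (α i)) * ι R (δ (α j)) * ι R (δ (β k)))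
        + ι R (α i) * ι R (α j) * ι R (β k)
      = 2 • (ι R (v i) * ι R (v j) * ι R (β k)) := by
    intro i j k
    rw [hδδα, hδδα, hδδβ, hδα', hδα', hδβ, map_add, map_add, map_add, map_add]
    noncomm_ring
  have ιv : ∀ i, ι R (v i) = ∑ r, q r i • ι R (β r) := by
    intro i; simp only [hv, map_sum, _root_.map_smul]
  -- expansion of LHS into one big sum
  have hexp : ExteriorAlgebra.map δ (ExteriorAlgebra.map δ
        (∑ i : Fin g, ∑ j ∈ univ.filter (fun j => i < j), ∑ k : Fin g,
          a i j k • (ι R (α i) * ι R (α j) * ι R (β k))))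
      - 2 • ExteriorAlgebra.map δ
        (∑ i : Fin g, ∑ j ∈ univ.filter (fun j => i < j), ∑ k : Fin g,
          a i j k • (ι R (α i) * ι R (α j) * ι R (β k)))
      + (∑ i : Fin g, ∑ j ∈ univ.filter (fun j => i < j), ∑ k : Fin g,
          a i j k • (ι R (α i) * ι R (α j) * ι R (β k)))
      = ∑ i : Fin g, ∑ j ∈ univ.filter (fun j => i < j), ∑ k : Fin g,
          a i j k • (ι R (δ (δ (α i))) * ι R (δ (δ (α j))) * ι R (δ (δ (β k)))
            - 2 • (ι R (δ (α i)) * ι R (δ (α j)) * ι R (δ (β k)))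
            + ι R (α i) * ι R (α j) * ι R (β k)) := by
    simp only [map_sum, _root_.map_smul, _root_.map_mul, ExteriorAlgebra.map_apply_ι, Finset.smul_sum,
      smul_sub, smul_add, smul_comm (2 : ℕ), ← Finset.sum_sub_distrib, ← Finset.sum_add_distrib]
  rw [hexp]
  simp only [hmain]
  have hswap : ∀ x y : Fin g, ι R (β x) * ι R (β y) = -(ι R (β y) * ι R (β x)) := fun x y =>
    eq_neg_of_add_eq_zero_left (ExteriorAlgebra.ι_add_mul_swap _ _)
  have hterm : ∀ i j k : Fin g,
      a i j k • (2 • (ι R (v i) * ι R (v j) * ι R (β k)))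
        = ∑ r : Fin g, ∑ s : Fin g, (2 * (q r i * q s j * a i j k)) •
            (ι R (β r) * ι R (β s) * ι R (β k)) := by
    intro i j k
    rw [ιv, ιv, Finset.sum_mul_sum, Finset.sum_mul]
    simp only [Finset.sum_mul, smul_mul_assoc, mul_smul_comm, Finset.smul_sum]
    refine Finset.sum_congr rfl fun r _ => Finset.sum_congr rfl fun s _ => ?_
    match_scalars <;> ring
  simp only [hterm]
  have reorder : ∀ i j : Fin g,
      (∑ k : Fin g, ∑ r : Fin g, ∑ s : Fin g, (2 * (q r i * q s j * a i j k)) •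
          (ι R (β r) * ι R (β s) * ι R (β k)))
        = ∑ r : Fin g, ∑ s : Fin g, ∑ k : Fin g, (2 * (q r i * q s j * a i j k)) •
            (ι R (β r) * ι R (β s) * ι R (β k)) := by
    intro i j
    exact (swap12 (fun k r s => (2 * (q r i * q s j * a i j k)) •
        (ι R (β r) * ι R (β s) * ι R (β k)))).trans
      (swap23 (fun r k s => (2 * (q r i * q s j * a i j k)) •
        (ι R (β r) * ι R (β s) * ι R (β k))))
  simp only [reorder]
  have hcore : ∀ i j : Fin g,
      (∑ r : Fin g, ∑ s : Fin g, ∑ k : Fin g, (2 * (q r i * q s j * a i j k)) •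
          (ι R (β r) * ι R (β s) * ι R (β k)))
        = ∑ r : Fin g, ∑ s ∈ univ.filter (fun s => r < s), ∑ t ∈ univ.filter (fun t => s < t),
            (2 * (q r i * q s j * a i j t) - 2 * (q r i * q t j * a i j s)
              - 2 * (q s i * q r j * a i j t) + 2 * (q s i * q t j * a i j r)
              + 2 * (q t i * q r j * a i j s) - 2 * (q t i * q s j * a i j r)) •
            (ι R (β r) * ι R (β s) * ι R (β t)) := fun i j =>
    core (fun x => ι R (β x)) (fun x => ExteriorAlgebra.ι_sq_zero _) hswap
      (fun r s k => 2 * (q r i * q s j * a i j k))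
  simp only [hcore]
  rw [block_swap (f := fun i j r s t =>
    (2 * (q r i * q s j * a i j t) - 2 * (q r i * q t j * a i j s)
      - 2 * (q s i * q r j * a i j t) + 2 * (q s i * q t j * a i j r)
      + 2 * (q t i * q r j * a i j s) - 2 * (q t i * q s j * a i j r)) •
      (ι R (β r) * ι R (β s) * ι R (β t)))]
  refine Finset.sum_congr rfl fun r _ => Finset.sum_congr rfl fun s _ =>
    Finset.sum_congr rfl fun t _ => ?_
  rw [Finset.mul_sum, Finset.sum_smul]
  refine Finset.sum_congr rfl fun i _ => ?_
  rw [Finset.mul_sum, Finset.sum_smul]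
  refine Finset.sum_congr rfl fun j _ => ?_
  congr 1
  simp [Matrix.det_fin_three]
  ring
end

section
/- Let G' be obtained from a graph G by subdividing an edge f into edges e₁, e₂, and let φ_f : R[G] → R[G'] be the ring map with φ_f(x_f) = x_{e₁} + x_{e₂} and φ_f(x_e) = x_e otherwise. Assume the transvection directions satisfy ℓ_f = ℓ_{e₁} = ℓ_{e₂} (the three curves are isotopic). Then (1 ⊗ φ_f) ∘ (δ_G − I) = (δ_{G'} − I) ∘ (1 ⊗ φ_f) as maps H ⊗ R[G] → H ⊗ R[G']. -/
open TensorProduct MvPolynomial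

/-!
Write each transvection as `δ_e = 1 + N_e` with `N_e (a ⊗ h) = x_e a ⊗ ⟨h, ℓ_e⟩ ℓ_e`. Pairwise
orthogonality of the `ℓ_e` gives `N_e N_{e'} = 0`, so every product of the `δ_e` collapses to
`1 + ∑ N_e`, and `δ_G − I = ∑_e N_e`. Applying `1 ⊗ φ_f` fixes `N_e` for `e ≠ f` and, because
`φ_f (x_f) = x_{e₁} + x_{e₂}` while `ℓ_{e₁} = ℓ_{e₂} = ℓ_f`, turns `N_f` into `N_{e₁} + N_{e₂}`.
-/

theorem List.prod_map_one_add_of_mul_eq_zero {α : Type*} [Ring α] :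
    ∀ l : List α, (∀ a ∈ l, ∀ b ∈ l, a * b = 0) → (l.map (1 + ·)).prod = 1 + l.sum
  | [], _ => by simp
  | a :: l, h => by
    have hl : ∀ b ∈ l, ∀ c ∈ l, b * c = 0 := fun b hb c hc =>
      h b (mem_cons_of_mem a hb) c (mem_cons_of_mem a hc)
    have ha : a * l.sum = 0 := by
      rw [← AddMonoidHom.coe_mulLeft, map_list_sum, List.sum_eq_zero]
      simp only [mem_map, AddMonoidHom.coe_mulLeft]
      rintro _ ⟨b, hb, rfl⟩
      exact h a mem_cons_self b (mem_cons_of_mem a hb)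
    rw [map_cons, prod_cons, prod_map_one_add_of_mul_eq_zero l hl, sum_cons]
    calc (1 + a) * (1 + l.sum) = 1 + (a + l.sum) + a * l.sum := by noncomm_ring
      _ = 1 + (a + l.sum) := by rw [ha, add_zero]

theorem List.prod_ofFn_eq_one_add_sum {α : Type*} [Ring α] {k : ℕ} (D : Fin k → α)
    (h : ∀ i j, (D i - 1) * (D j - 1) = 0) :
    (List.ofFn D).prod = 1 + ∑ i, (D i - 1) := by
  have hD : List.ofFn D = (List.ofFn fun i => D i - 1).map (1 + ·) := by
    simp only [List.map_ofFn, Function.comp_def, add_sub_cancel]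
  rw [hD, prod_map_one_add_of_mul_eq_zero, List.sum_ofFn]
  simp only [List.mem_ofFn]
  rintro _ ⟨i, rfl⟩ _ ⟨j, rfl⟩
  exact h i j

section Transvection

variable {R A H : Type*} [CommRing R] [CommRing A] [Module R A] [SMulCommClass R A A]
  [AddCommGroup H] [Module R H]

theorem transvection_sub_one_apply_tmul {d : Module.End A (A ⊗[R] H)} {x : A} {t : H → H}
    (hd : ∀ a h, d (a ⊗ₜ h) = a ⊗ₜ h + (x * a) ⊗ₜ t h) (a : A) (h : H) :
    (d - 1) (a ⊗ₜ h) = (x * a) ⊗ₜ t h := by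
  rw [LinearMap.sub_apply, Module.End.one_apply, hd, add_sub_cancel_left]

theorem transvection_sub_one_mul_sub_one {d d' : Module.End A (A ⊗[R] H)} {x x' : A}
    {t t' : H → H} (hd : ∀ a h, d (a ⊗ₜ h) = a ⊗ₜ h + (x * a) ⊗ₜ t h)
    (hd' : ∀ a h, d' (a ⊗ₜ h) = a ⊗ₜ h + (x' * a) ⊗ₜ t' h) (ht : ∀ h, t (t' h) = 0) :
    (d - 1) * (d' - 1) = 0 := by
  ext m
  induction m using TensorProduct.induction_on with
  | zero => simp
  | tmul a h =>
    rw [Module.End.mul_apply, transvection_sub_one_apply_tmul hd',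
      transvection_sub_one_apply_tmul hd, ht, tmul_zero, LinearMap.zero_apply]
  | add m m' hm hm' => rw [map_add, hm, hm', map_add]

theorem prod_ofFn_transvection {k : ℕ} (d : Fin k → Module.End A (A ⊗[R] H))
    (x : Fin k → A) (t : Fin k → H → H)
    (hd : ∀ i a h, d i (a ⊗ₜ h) = a ⊗ₜ h + (x i * a) ⊗ₜ t i h)
    (ht : ∀ i j h, t i (t j h) = 0) :
    (List.ofFn d).prod = 1 + ∑ i, (d i - 1) :=
  List.prod_ofFn_eq_one_add_sum d fun i j =>
    transvection_sub_one_mul_sub_one (hd i) (hd j) (ht i j)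

end Transvection

section Subdivision

variable {R H σ : Type*} [CommRing R] [AddCommGroup H] [Module R H] [Fintype σ] [DecidableEq σ]
  {φ : MvPolynomial σ R →ₐ[R] MvPolynomial (σ ⊕ Fin 1) R} {f : σ}

theorem sum_tmul_subdivide
    (hφ : ∀ e, φ (X e) = if e = f then X (Sum.inl f) + X (Sum.inr 0) else X (Sum.inl e))
    (b : MvPolynomial (σ ⊕ Fin 1) R) (w : σ → H) :
    ∑ i, (φ (X i) * b) ⊗ₜ[R] w i
      = ∑ i, (X (Sum.inl i) * b) ⊗ₜ[R] w i + (X (Sum.inr 0) * b) ⊗ₜ[R] w f := by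
  have hsplit : ∀ i, (φ (X i) * b) ⊗ₜ[R] w i = (X (Sum.inl i) * b) ⊗ₜ[R] w i
      + if i = f then (X (Sum.inr 0) * b) ⊗ₜ[R] w f else 0 := by
    intro i
    rw [hφ]
    split_ifs with hi
    · rw [hi, add_mul, add_tmul]
    · rw [add_zero]
  rw [Finset.sum_congr rfl fun i _ => hsplit i, Finset.sum_add_distrib, Finset.sum_ite_eq',
    if_pos (Finset.mem_univ f)]

theorem rTensor_sum_transvection_subdivide (τ : H → H → H) (ℓ : σ → H)
    (d : σ → Module.End (MvPolynomial σ R) (MvPolynomial σ R ⊗[R] H))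
    (hd : ∀ i a h, d i (a ⊗ₜ h) = a ⊗ₜ h + (X i * a) ⊗ₜ τ (ℓ i) h)
    (d' : σ ⊕ Fin 1 →
      Module.End (MvPolynomial (σ ⊕ Fin 1) R) (MvPolynomial (σ ⊕ Fin 1) R ⊗[R] H))
    (hd' : ∀ e a h, d' e (a ⊗ₜ h) = a ⊗ₜ h + (X e * a) ⊗ₜ τ (Sum.elim ℓ (fun _ => ℓ f) e) h)
    (hφ : ∀ e, φ (X e) = if e = f then X (Sum.inl f) + X (Sum.inr 0) else X (Sum.inl e))
    (m : MvPolynomial σ R ⊗[R] H) :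
    LinearMap.rTensor H φ.toLinearMap ((∑ i, (d i - 1)) m)
      = (∑ e, (d' e - 1)) (LinearMap.rTensor H φ.toLinearMap m) := by
  induction m using TensorProduct.induction_on with
  | zero => simp
  | tmul a h =>
    simp only [Fintype.sum_sum_type, Fin.sum_univ_one, LinearMap.add_apply,
      LinearMap.sum_apply, map_sum, LinearMap.rTensor_tmul, AlgHom.toLinearMap_apply,
      transvection_sub_one_apply_tmul (hd _), transvection_sub_one_apply_tmul (hd' _),
      map_mul, Sum.elim_inl, Sum.elim_inr]
    exact sum_tmul_subdivide hφ (φ a) fun i => τ (ℓ i) h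
  | add m m' hm hm' => simp only [map_add, hm, hm']

end Subdivision

-- The edges of `G'` are `Fin n ⊕ Fin 1`, with `e₁ = Sum.inl f` and `e₂ = Sum.inr 0`.
theorem stmt_11_general {H : Type*} [AddCommGroup H] [Module ℤ H]
    (B : H →ₗ[ℤ] H →ₗ[ℤ] ℤ)
    {n : ℕ} (ℓ : Fin n → H)
    (horth : ∀ i j, B (ℓ i) (ℓ j) = 0)
    (f : Fin n)
    (d : Fin n →
      Module.End (MvPolynomial (Fin n) ℤ) ((MvPolynomial (Fin n) ℤ) ⊗[ℤ] H))
    (hd : ∀ (i : Fin n) (a : MvPolynomial (Fin n) ℤ) (h : H),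
      d i (a ⊗ₜ[ℤ] h) = a ⊗ₜ[ℤ] h + (X i * a) ⊗ₜ[ℤ] (B h (ℓ i) • ℓ i))
    (d' : (Fin n ⊕ Fin 1) →
      Module.End (MvPolynomial (Fin n ⊕ Fin 1) ℤ)
        ((MvPolynomial (Fin n ⊕ Fin 1) ℤ) ⊗[ℤ] H))
    (hd' : ∀ (e : Fin n ⊕ Fin 1) (a : MvPolynomial (Fin n ⊕ Fin 1) ℤ) (h : H),
      d' e (a ⊗ₜ[ℤ] h)
        = a ⊗ₜ[ℤ] h
          + (X e * a) ⊗ₜ[ℤ]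
            (B h (Sum.elim ℓ (fun _ => ℓ f) e) • Sum.elim ℓ (fun _ => ℓ f) e))
    (φ : MvPolynomial (Fin n) ℤ →ₐ[ℤ] MvPolynomial (Fin n ⊕ Fin 1) ℤ)
    (hφ : ∀ e : Fin n,
      φ (X e) = if e = f then X (Sum.inl f) + X (Sum.inr 0) else X (Sum.inl e))
    (m : (MvPolynomial (Fin n) ℤ) ⊗[ℤ] H) :
    LinearMap.rTensor H φ.toLinearMap ((List.ofFn fun i => d i).prod m - m)
      = (List.ofFn fun i : Fin (n + 1) => d' (finSumFinEquiv.symm i)).prod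
          (LinearMap.rTensor H φ.toLinearMap m)
        - LinearMap.rTensor H φ.toLinearMap m := by
  set ℓ' := Sum.elim ℓ fun _ => ℓ f
  have hℓ' : ∀ e e', B (ℓ' e) (ℓ' e') = 0 := by
    rintro (i | i) (j | j) <;> exact horth _ _
  have hτ : ∀ v w, B w v = 0 → ∀ h, B (B h w • w) v • v = 0 := by
    intro v w hwv h
    simp only [map_zsmul, LinearMap.smul_apply, hwv, smul_zero, zero_smul]
  rw [prod_ofFn_transvection d X _ hd fun i j => hτ _ _ (horth j i),
    prod_ofFn_transvection _ _ _ (fun k => hd' (finSumFinEquiv.symm k))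
      fun i j => hτ _ _ (hℓ' _ _),
    Equiv.sum_comp finSumFinEquiv.symm fun e => d' e - 1]
  simp only [LinearMap.add_apply, Module.End.one_apply, add_sub_cancel_left]
  exact rTensor_sum_transvection_subdivide (fun v h => B h v • v) ℓ d hd d' hd' hφ m

/-- Edge subdivision: let `G'` be obtained from `G` by subdividing
the edge `f` into `e₁ = Sum.inl f` and `e₂ = Sum.inr 0`, with corresponding curves all
equal to `ℓ f`, and let `φ_f` be the ring map with `x_f ↦ x_{e₁} + x_{e₂}` and
`x_e ↦ x_e` otherwise. Then `(1 ⊗ φ_f) ∘ (δ_G − I) = (δ_{G'} − I) ∘ (1 ⊗ φ_f)`. -/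
theorem stmt_11 {H : Type*} [AddCommGroup H] [Module ℤ H] [Module.Free ℤ H]
    (B : H →ₗ[ℤ] H →ₗ[ℤ] ℤ) (halt : ∀ h : H, B h h = 0)
    {n : ℕ} (ℓ : Fin n → H)
    (horth : ∀ i j, B (ℓ i) (ℓ j) = 0)
    (f : Fin n)
    (d : Fin n →
      Module.End (MvPolynomial (Fin n) ℤ) ((MvPolynomial (Fin n) ℤ) ⊗[ℤ] H))
    (hd : ∀ (i : Fin n) (a : MvPolynomial (Fin n) ℤ) (h : H),
      d i (a ⊗ₜ[ℤ] h) = a ⊗ₜ[ℤ] h + (X i * a) ⊗ₜ[ℤ] (B h (ℓ i) • ℓ i))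
    (d' : (Fin n ⊕ Fin 1) →
      Module.End (MvPolynomial (Fin n ⊕ Fin 1) ℤ)
        ((MvPolynomial (Fin n ⊕ Fin 1) ℤ) ⊗[ℤ] H))
    (hd' : ∀ (e : Fin n ⊕ Fin 1) (a : MvPolynomial (Fin n ⊕ Fin 1) ℤ) (h : H),
      d' e (a ⊗ₜ[ℤ] h)
        = a ⊗ₜ[ℤ] h
          + (X e * a) ⊗ₜ[ℤ]
            (B h (Sum.elim ℓ (fun _ => ℓ f) e) • Sum.elim ℓ (fun _ => ℓ f) e))
    (φ : MvPolynomial (Fin n) ℤ →ₐ[ℤ] MvPolynomial (Fin n ⊕ Fin 1) ℤ)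
    (hφ : ∀ e : Fin n,
      φ (X e) = if e = f then X (Sum.inl f) + X (Sum.inr 0) else X (Sum.inl e))
    (m : (MvPolynomial (Fin n) ℤ) ⊗[ℤ] H) :
    LinearMap.rTensor H φ.toLinearMap ((List.ofFn fun i => d i).prod m - m)
      = (List.ofFn fun i : Fin (n + 1) => d' (finSumFinEquiv.symm i)).prod
          (LinearMap.rTensor H φ.toLinearMap m)
        - LinearMap.rTensor H φ.toLinearMap m :=
  stmt_11_general B ℓ horth f d hd d' hd' φ hφ m
end

section
/- Let Q be a symmetric g×g matrix of linear forms over R = ℤ[x₀,x₁,…,x_n] (indices 0..g−1 for rows/columns) such that the variable x₀ appears only in the entry q₀₀ (with coefficient 1). Suppose integers a_{ijk} and linear forms b_{ijk} ∈ ℤ[x₁,…,x_n] with b_{0jk} = 0 satisfy, for all 0 ≤ r < s < t < g: ∑_i (b_{irs}q_{ti} − b_{irt}q_{si} + b_{ist}q_{ri}) = 2∑_{i<j} det[(q_{ri},q_{rj},a_{ijr}),(q_{si},q_{sj},a_{ijs}),(q_{ti},q_{tj},a_{ijt})]. Then for all 0 < s < t, the coefficient of x₀ on the right-hand side with r = 0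 forces ∑_{j≥1} (q_{sj}a_{0jt} − q_{tj}a_{0js}) = 0. -/
open MvPolynomial Matrix Finset

/-!
Differentiate the identity for `r = 0` with respect to `x₀`. Every `b` and every `q_{ij}` other
than `q₀₀` is killed by `∂/∂x₀`, and `b_{0st} = 0`, so the left-hand side has derivative `0`.
On the right, `q₀₀` can only occur in the determinants with `i = 0`, at their top-left corner,
where `∂q₀₀/∂x₀ = 1` leaves the complementary minor `q_{sj} a_{0jt} - q_{tj} a_{0js}`.
Cancelling the factor `2` in the domain `ℤ[x₀,…,x_n]` gives the claim.
-/

theorem MvPolynomial.pderiv_eq_zero_of_degreeOf_eq_zero {R σ : Type*} [CommSemiring R]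
    {i : σ} {p : MvPolynomial σ R} (h : p.degreeOf i = 0) : pderiv i p = 0 :=
  pderiv_eq_zero_of_notMem_vars fun hi => mem_vars_iff_degreeOf_ne_zero.mp hi h

theorem Derivation.map_det_fin_three_of_map_eq_zero {R A : Type*} [CommRing R] [CommRing A]
    [Algebra R A] (D : Derivation R A A) (M : Matrix (Fin 3) (Fin 3) A)
    (hM : ∀ k l, (k ≠ 0 ∨ l ≠ 0) → D (M k l) = 0) :
    D M.det = D (M 0 0) * (M 1 1 * M 2 2 - M 1 2 * M 2 1) := by
  rw [det_fin_three]
  simp only [map_add, map_sub, Derivation.leibniz, smul_eq_mul, hM 0 1 (by decide),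
    hM 0 2 (by decide), hM 1 0 (by decide), hM 1 1 (by decide), hM 1 2 (by decide),
    hM 2 0 (by decide), hM 2 1 (by decide), hM 2 2 (by decide)]
  ring

section CornerDerivation

variable {R A : Type*} [CommRing R] [CommRing A] [Algebra R A] (D : Derivation R A A)
  {g : ℕ} {q : Fin (g + 1) → Fin (g + 1) → A}

theorem Derivation.map_sum_cyclic_eq_zero (b : Fin (g + 1) → Fin (g + 1) → Fin (g + 1) → A)
    (hq : ∀ i j, (i ≠ 0 ∨ j ≠ 0) → D (q i j) = 0) (hb : ∀ i j k, D (b i j k) = 0)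
    (hb0 : ∀ j k, b 0 j k = 0) {s t : Fin (g + 1)} (hs : s ≠ 0) (ht : t ≠ 0) :
    D (∑ i, (b i 0 s * q t i - b i 0 t * q s i + b i s t * q 0 i)) = 0 := by
  rw [map_sum]
  refine sum_eq_zero fun i _ => ?_
  rcases eq_or_ne i 0 with rfl | hi
  · simp [hb0]
  · simp only [map_add, map_sub, Derivation.leibniz, smul_eq_mul, hb, hq t i (.inl ht),
      hq s i (.inl hs), hq 0 i (.inr hi)]
    ring

theorem Derivation.map_sum_det_eq (c : Fin (g + 1) → Fin (g + 1) → Fin (g + 1) → A)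
    (hq00 : D (q 0 0) = 1) (hq : ∀ i j, (i ≠ 0 ∨ j ≠ 0) → D (q i j) = 0)
    (hc : ∀ i j k, D (c i j k) = 0) {s t : Fin (g + 1)} (hs : s ≠ 0) (ht : t ≠ 0) :
    D (∑ i, ∑ j ∈ univ.filter (fun j => i < j),
        (!![q 0 i, q 0 j, c i j 0;
            q s i, q s j, c i j s;
            q t i, q t j, c i j t] : Matrix (Fin 3) (Fin 3) A).det)
      = ∑ j ∈ univ.filter (fun j : Fin (g + 1) => 0 < j),
          (q s j * c 0 j t - q t j * c 0 j s) := by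
  have hdet : ∀ i j : Fin (g + 1), i < j →
      D (!![q 0 i, q 0 j, c i j 0;
            q s i, q s j, c i j s;
            q t i, q t j, c i j t] : Matrix (Fin 3) (Fin 3) A).det
        = D (q 0 i) * (q s j * c i j t - c i j s * q t j) := by
    intro i j hij
    have hj : j ≠ 0 := (Fin.zero_le i |>.trans_lt hij).ne'
    refine D.map_det_fin_three_of_map_eq_zero _ fun k l hkl => ?_
    fin_cases k <;> fin_cases l <;> simp [hq, hc, hs, ht, hj] at hkl ⊢
  rw [map_sum, sum_eq_single_of_mem 0 (mem_univ 0)]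
  · rw [map_sum]
    refine sum_congr rfl fun j hj => ?_
    rw [hdet 0 j (mem_filter.mp hj).2, hq00, one_mul, mul_comm (c 0 j s)]
  · intro i _ hi
    rw [map_sum]
    refine sum_eq_zero fun j hj => ?_
    rw [hdet i j (mem_filter.mp hj).2, hq 0 i (.inr hi), zero_mul]

end CornerDerivation

theorem stmt_18_general {n g : ℕ}
    (q : Fin (g + 1) → Fin (g + 1) → MvPolynomial (Fin (n + 1)) ℤ)
    (hq00 : MvPolynomial.degreeOf (0 : Fin (n + 1)) (q 0 0 - X 0) = 0)
    (hq : ∀ i j : Fin (g + 1), ¬(i = 0 ∧ j = 0) →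
      MvPolynomial.degreeOf (0 : Fin (n + 1)) (q i j) = 0)
    (a : Fin (g + 1) → Fin (g + 1) → Fin (g + 1) → ℤ)
    (b : Fin (g + 1) → Fin (g + 1) → Fin (g + 1) → MvPolynomial (Fin (n + 1)) ℤ)
    (hbx0 : ∀ i j k, MvPolynomial.degreeOf (0 : Fin (n + 1)) (b i j k) = 0)
    (hb0 : ∀ j k, b 0 j k = 0)
    (hid : ∀ r s t : Fin (g + 1), r < s → s < t →
      ∑ i : Fin (g + 1),
          (b i r s * q t i - b i r t * q s i + b i s t * q r i)
        = 2 * ∑ i : Fin (g + 1), ∑ j ∈ univ.filter (fun j => i < j),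
            (!![q r i, q r j, C (a i j r);
                q s i, q s j, C (a i j s);
                q t i, q t j, C (a i j t)] :
              Matrix (Fin 3) (Fin 3) (MvPolynomial (Fin (n + 1)) ℤ)).det) :
    ∀ s t : Fin (g + 1), 0 < s → s < t →
      ∑ j ∈ univ.filter (fun j : Fin (g + 1) => 0 < j),
          (q s j * C (a 0 j t) - q t j * C (a 0 j s)) = 0 := by
  intro s t hs hst
  set D := pderiv (R := ℤ) (0 : Fin (n + 1))
  have hDq00 : D (q 0 0) = 1 := by
    simpa [D, sub_eq_zero] using pderiv_eq_zero_of_degreeOf_eq_zero hq00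
  have hDq : ∀ i j, (i ≠ 0 ∨ j ≠ 0) → D (q i j) = 0 := fun i j hij =>
    pderiv_eq_zero_of_degreeOf_eq_zero (hq i j (by tauto))
  have hDb : ∀ i j k, D (b i j k) = 0 := fun i j k =>
    pderiv_eq_zero_of_degreeOf_eq_zero (hbx0 i j k)
  have key := congrArg D (hid 0 s t hs hst)
  rw [D.map_sum_cyclic_eq_zero b hDq hDb hb0 hs.ne' (hs.trans hst).ne', two_mul, map_add,
    D.map_sum_det_eq (fun i j k => C (a i j k)) hDq00 hDq (fun _ _ _ => pderiv_C)
      hs.ne' (hs.trans hst).ne', ← two_mul] at key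
  exact (mul_eq_zero.mp key.symm).resolve_left two_ne_zero

/-- Let `Q = (q_{ij})` (indices `0 ≤ i,j ≤ g`) be a symmetric
matrix of homogeneous linear forms over `ℤ[x₀,…,x_n]` in which `x₀` occurs only in
`q₀₀`, with coefficient 1.  Suppose integers `a_{ijk}` and linear forms
`b_{ijk} ∈ ℤ[x₁,…,x_n]` with `b_{0jk} = 0` and `b_{i0k} = 0` satisfy, for all
`r < s < t`,
`∑_i (b_{irs}q_{ti} − b_{irt}q_{si} + b_{ist}q_{ri})
  = 2 ∑_{i<j} det [[q_{ri},q_{rj},a_{ijr}],[q_{si},q_{sj},a_{ijs}],[q_{ti},q_{tj},a_{ijt}]]`.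
Then extracting the coefficient of `x₀` at `r = 0` forces, for all `0 < s < t`,
`∑_{j ≥ 1} (q_{sj} a_{0jt} − q_{tj} a_{0js}) = 0`. -/
theorem stmt_18 {n g : ℕ}
    (q : Fin (g + 1) → Fin (g + 1) → MvPolynomial (Fin (n + 1)) ℤ)
    (hsym : ∀ i j, q i j = q j i)
    (hlin : ∀ i j, (q i j).IsHomogeneous 1)
    (hq00 : MvPolynomial.degreeOf (0 : Fin (n + 1)) (q 0 0 - X 0) = 0)
    (hq : ∀ i j : Fin (g + 1), ¬(i = 0 ∧ j = 0) →
      MvPolynomial.degreeOf (0 : Fin (n + 1)) (q i j) = 0)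
    (a : Fin (g + 1) → Fin (g + 1) → Fin (g + 1) → ℤ)
    (b : Fin (g + 1) → Fin (g + 1) → Fin (g + 1) → MvPolynomial (Fin (n + 1)) ℤ)
    (hblin : ∀ i j k, (b i j k).IsHomogeneous 1)
    (hbx0 : ∀ i j k, MvPolynomial.degreeOf (0 : Fin (n + 1)) (b i j k) = 0)
    (hb0 : ∀ j k, b 0 j k = 0) (hb0' : ∀ i k, b i 0 k = 0)
    (hid : ∀ r s t : Fin (g + 1), r < s → s < t →
      ∑ i : Fin (g + 1),
          (b i r s * q t i - b i r t * q s i + b i s t * q r i)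
        = 2 * ∑ i : Fin (g + 1), ∑ j ∈ univ.filter (fun j => i < j),
            (!![q r i, q r j, C (a i j r);
                q s i, q s j, C (a i j s);
                q t i, q t j, C (a i j t)] :
              Matrix (Fin 3) (Fin 3) (MvPolynomial (Fin (n + 1)) ℤ)).det) :
    ∀ s t : Fin (g + 1), 0 < s → s < t →
      ∑ j ∈ univ.filter (fun j : Fin (g + 1) => 0 < j),
          (q s j * C (a 0 j t) - q t j * C (a 0 j s)) = 0 :=
  stmt_18_general q hq00 hq a b hbx0 hb0 hid
end

section
/- Let H = ℤ^{2g} with symplectic basis α₁,…,α_g,β₁,…,β_g and δ = ((I,0),(Q,I)) for the K₄-matrix Q at edge lengths c = (2,1,1,1,1,1), i.e., Q = [[4,−1,−1],[−1,3,−1],[−1,−1,3]] (g = 3). Then (∧³δ − I)²(F₁) ∩ ℤ·(β₁∧β₂∧β₃) contains 2·β₁∧β₂∧β₃; in particular the element −2·β₁∧β₂∧β₃ lies in (∧³δ − I)²(F₁), where F₁ = Span_ℤ{α_i∧α_j∧β_k}. -/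
open ExteriorAlgebra Matrix

set_option maxHeartbeats 1600000

/-- For `δ = ((I,0),(Q,I))` on `ℤ⁶` with the `K₄`-matrix at edge
lengths `c = (2,1,1,1,1,1)`, i.e. `Q = [[4,−1,−1],[−1,3,−1],[−1,−1,3]]`, the image
`(∧³δ − I)²(F₁)` contains `2·β₁∧β₂∧β₃`; in particular it contains
`−2·β₁∧β₂∧β₃`. -/
theorem stmt_19
    (δ : ((Fin 3 → ℤ) × (Fin 3 → ℤ)) →ₗ[ℤ] ((Fin 3 → ℤ) × (Fin 3 → ℤ)))
    (hδ : ∀ p : (Fin 3 → ℤ) × (Fin 3 → ℤ),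
      δ p = (p.1, p.2 + (!![4, -1, -1; -1, 3, -1; -1, -1, 3] :
        Matrix (Fin 3) (Fin 3) ℤ).mulVec p.1)) :
    (∃ u ∈ Submodule.span ℤ
        {z : ExteriorAlgebra ℤ ((Fin 3 → ℤ) × (Fin 3 → ℤ)) |
          ∃ i j k : Fin 3,
            z = ι ℤ ((Pi.single i 1, 0) : (Fin 3 → ℤ) × (Fin 3 → ℤ))
              * ι ℤ ((Pi.single j 1, 0) : (Fin 3 → ℤ) × (Fin 3 → ℤ))
              * ι ℤ ((0, Pi.single k 1) : (Fin 3 → ℤ) × (Fin 3 → ℤ))},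
      ExteriorAlgebra.map δ (ExteriorAlgebra.map δ u)
          - 2 • ExteriorAlgebra.map δ u + u
        = (2 : ℤ) • (ι ℤ ((0, Pi.single 0 1) : (Fin 3 → ℤ) × (Fin 3 → ℤ))
            * ι ℤ ((0, Pi.single 1 1) : (Fin 3 → ℤ) × (Fin 3 → ℤ))
            * ι ℤ ((0, Pi.single 2 1) : (Fin 3 → ℤ) × (Fin 3 → ℤ)))) ∧
    (∃ u ∈ Submodule.span ℤ
        {z : ExteriorAlgebra ℤ ((Fin 3 → ℤ) × (Fin 3 → ℤ)) |
          ∃ i j k : Fin 3,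
            z = ι ℤ ((Pi.single i 1, 0) : (Fin 3 → ℤ) × (Fin 3 → ℤ))
              * ι ℤ ((Pi.single j 1, 0) : (Fin 3 → ℤ) × (Fin 3 → ℤ))
              * ι ℤ ((0, Pi.single k 1) : (Fin 3 → ℤ) × (Fin 3 → ℤ))},
      ExteriorAlgebra.map δ (ExteriorAlgebra.map δ u)
          - 2 • ExteriorAlgebra.map δ u + u
        = (-2 : ℤ) • (ι ℤ ((0, Pi.single 0 1) : (Fin 3 → ℤ) × (Fin 3 → ℤ))
            * ι ℤ ((0, Pi.single 1 1) : (Fin 3 → ℤ) × (Fin 3 → ℤ))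
            * ι ℤ ((0, Pi.single 2 1) : (Fin 3 → ℤ) × (Fin 3 → ℤ)))) := by
  classical
  set M := (Fin 3 → ℤ) × (Fin 3 → ℤ) with hM
  set A : Fin 3 → ExteriorAlgebra ℤ M := fun i => ι ℤ ((Pi.single i 1, 0) : M) with hA
  set B : Fin 3 → ExteriorAlgebra ℤ M := fun i => ι ℤ ((0, Pi.single i 1) : M) with hB
  set E := ExteriorAlgebra.map δ with hE
  set u : ExteriorAlgebra ℤ M :=
    (A 0 * A 1 * B 1) - (A 0 * A 1 * B 0) with hu
  have hmem : u ∈ Submodule.span ℤ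
      {z : ExteriorAlgebra ℤ M |
        ∃ i j k : Fin 3,
          z = ι ℤ ((Pi.single i 1, 0) : M) * ι ℤ ((Pi.single j 1, 0) : M)
            * ι ℤ ((0, Pi.single k 1) : M)} := by
    apply Submodule.sub_mem
    · exact Submodule.subset_span ⟨0, 1, 1, rfl⟩
    · exact Submodule.subset_span ⟨0, 1, 0, rfl⟩
  have hδa : ∀ i : Fin 3, δ ((Pi.single i 1, 0) : M)
      = ((Pi.single i 1, 0) : M) + (0, (!![4, -1, -1; -1, 3, -1; -1, -1, 3] :
        Matrix (Fin 3) (Fin 3) ℤ).mulVec (Pi.single i 1)) := by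
    intro i
    rw [hδ]
    refine Prod.ext ?_ ?_ <;> simp
  have hδb : ∀ w : Fin 3 → ℤ, δ ((0, w) : M) = ((0, w) : M) := by
    intro w
    rw [hδ]
    refine Prod.ext rfl ?_
    simp
  set V : Fin 3 → ExteriorAlgebra ℤ M := fun i =>
    ι ℤ (((0, (!![4, -1, -1; -1, 3, -1; -1, -1, 3] :
      Matrix (Fin 3) (Fin 3) ℤ).mulVec (Pi.single i 1)) : M)) with hV
  have hEA : ∀ i : Fin 3, E (A i) = A i + V i := by
    intro i
    rw [hE, hA, hV]
    simp only [ExteriorAlgebra.map_apply_ι, hδa i, map_add]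
  have hEV : ∀ i : Fin 3, E (V i) = V i := by
    intro i
    rw [hE, hV]
    simp only [ExteriorAlgebra.map_apply_ι, hδb]
  have hEB : ∀ i : Fin 3, E (B i) = B i := by
    intro i
    rw [hE, hB]
    simp only [ExteriorAlgebra.map_apply_ι, hδb]
  have hv0 : (((0, (!![4, -1, -1; -1, 3, -1; -1, -1, 3] :
      Matrix (Fin 3) (Fin 3) ℤ).mulVec (Pi.single 0 1)) : M)
      = (4:ℤ) • ((0, Pi.single 0 1) : M) - (0, Pi.single 1 1) - (0, Pi.single 2 1)) := by
    refine Prod.ext ?_ ?_ <;> funext j <;> fin_cases j <;>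
      simp [Matrix.mulVec, dotProduct, Fin.sum_univ_three, Pi.single_apply]
  have hv1 : (((0, (!![4, -1, -1; -1, 3, -1; -1, -1, 3] :
      Matrix (Fin 3) (Fin 3) ℤ).mulVec (Pi.single 1 1)) : M)
      = -((0, Pi.single 0 1) : M) + (3:ℤ) • ((0, Pi.single 1 1) : M) - (0, Pi.single 2 1)) := by
    refine Prod.ext ?_ ?_ <;> funext j <;> fin_cases j <;>
      simp [Matrix.mulVec, dotProduct, Fin.sum_univ_three, Pi.single_apply]
  have hV0 : V 0 = (4:ℤ) • B 0 - B 1 - B 2 := by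
    simp only [hV, hB, hv0, _root_.map_sub, _root_.map_smul]
  have hV1 : V 1 = -B 0 + (3:ℤ) • B 1 - B 2 := by
    simp only [hV, hB, hv1, _root_.map_sub, _root_.map_add, _root_.map_neg, _root_.map_smul]
  -- relations
  have hsq : ∀ (i : Fin 3) (x : ExteriorAlgebra ℤ M), B i * (B i * x) = 0 := by
    intro i x
    rw [hB, ← mul_assoc, ι_sq_zero, zero_mul]
  have hsq' : ∀ i : Fin 3, B i * B i = 0 := fun i => ι_sq_zero _
  have hsw : ∀ i j : Fin 3, B j * B i = -(B i * B j) := by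
    intro i j
    have h := ι_add_mul_swap (R := ℤ) ((0, Pi.single i 1) : M) ((0, Pi.single j 1) : M)
    rw [hB]
    linear_combination (norm := noncomm_ring) h
  have hswx : ∀ (i j : Fin 3) (x : ExteriorAlgebra ℤ M),
      B j * (B i * x) = -(B i * (B j * x)) := by
    intro i j x
    rw [← mul_assoc, hsw i j, neg_mul, mul_assoc]
  have hkey : E (E u) - 2 • E u + u = (2:ℤ) • (B 0 * B 1 * B 2) := by
    have hEu : E u = (A 0 + V 0) * ((A 1 + V 1) * B 1)
        - (A 0 + V 0) * ((A 1 + V 1) * B 0) := by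
      rw [hu]
      simp only [_root_.map_sub, _root_.map_mul, hEA, hEB, mul_assoc]
    have hEEu : E (E u) = (A 0 + V 0 + V 0) * ((A 1 + V 1 + V 1) * B 1)
        - (A 0 + V 0 + V 0) * ((A 1 + V 1 + V 1) * B 0) := by
      rw [hEu]
      simp only [_root_.map_sub, _root_.map_mul, _root_.map_add, hEA, hEB, hEV]
    rw [hEEu, hEu, hu]
    have step1 : (A 0 + V 0 + V 0) * ((A 1 + V 1 + V 1) * B 1)
          - (A 0 + V 0 + V 0) * ((A 1 + V 1 + V 1) * B 0)
        - 2 • ((A 0 + V 0) * ((A 1 + V 1) * B 1) - (A 0 + V 0) * ((A 1 + V 1) * B 0))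
        + (A 0 * A 1 * B 1 - A 0 * A 1 * B 0)
        = (2:ℤ) • (V 0 * (V 1 * B 1) - V 0 * (V 1 * B 0)) := by
      simp only [two_smul, smul_sub]
      noncomm_ring
    rw [step1, hV0, hV1]
    simp only [sub_mul, add_mul, mul_sub, mul_add, neg_mul, mul_neg, smul_mul_assoc,
      mul_smul_comm, mul_assoc, hsq, hsq', hswx 0 1, hswx 0 2, hswx 1 2, hsw 0 1, hsw 0 2, hsw 1 2, smul_neg, smul_smul, smul_zero,
      mul_zero, neg_neg, neg_zero, add_zero, zero_add, sub_zero, zero_sub, sub_neg_eq_add]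
    module
  refine ⟨⟨u, hmem, hkey⟩, ⟨-u, Submodule.neg_mem _ hmem, ?_⟩⟩
  rw [map_neg, map_neg]
  linear_combination (norm := module) -hkey
end
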